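/- For every θ > 0, every n ≥ 1 and every t > 0, the number of leaves L_n^{(θ)} of a Hoppe tree with n nodes and parameter θ satisfies the concentration inequality P(|L_n^{(θ)} − E[L_n^{(θ)}]| ≥ t) ≤ 2 exp(−6t²/(n + θ + 1)). -/

import Mathlib

open MeasureTheory ProbabilityTheory Real Filter Topology

noncomputable section

/-- Depth of node `i` in the Hoppe tree grown from the parent choices `U`:
`U k ω` is the parent of node `k + 2` (a node in `{1, …, k + 1}`, almost surely);
node `1` is the root. The `min` clipping is irrelevant almost surely. -/
def hoppeDepth {Ω : Type*} (U : ℕ → Ω → ℕ) (ω : Ω) : ℕ → ℕ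
  | 0 => 0
  | 1 => 0
  | n + 2 => hoppeDepth U ω (min (U n ω) (n + 1)) + 1
  decreasing_by omega

/-- The parent choices of a Hoppe tree with parameter `θ`: `U k` is the (random) parent
of node `k + 2`, the choices being independent, node `k + 2` choosing its parent among
nodes `1, …, k + 1`, namely the root `1` with probability `θ / (θ + k)` and each other
node with probability `1 / (θ + k)`. -/
structure IsHoppeParents {Ω : Type*} [MeasurableSpace Ω] (θ : ℝ) (μ : Measure Ω)
    (U : ℕ → Ω → ℕ) : Prop where
  meas : ∀ k, Measurable (U k)
  indep : iIndepFun U μ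
  root : ∀ k : ℕ, μ {ω | U k ω = 1} = ENNReal.ofReal (θ / (θ + k))
  nonroot : ∀ k j : ℕ, 2 ≤ j → j ≤ k + 1 → μ {ω | U k ω = j} = ENNReal.ofReal (1 / (θ + k))
  range : ∀ k : ℕ, μ {ω | 1 ≤ U k ω ∧ U k ω ≤ k + 1} = 1

/-- Height of the Hoppe tree with `n` nodes: maximal depth over nodes `1, …, n`. -/
def hoppeHeight {Ω : Type*} (U : ℕ → Ω → ℕ) (ω : Ω) (n : ℕ) : ℕ :=
  (Finset.Icc 1 n).sup (fun i => hoppeDepth U ω i)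

/-- Internal path length of the Hoppe tree with `n` nodes: sum of the depths of
nodes `1, …, n`. -/
def hoppePathLength {Ω : Type*} (U : ℕ → Ω → ℕ) (ω : Ω) (n : ℕ) : ℕ :=
  ∑ i ∈ Finset.Icc 1 n, hoppeDepth U ω i

open Classical in
/-- Number of leaves of the Hoppe tree with `n` nodes: nodes `j ∈ {1, …, n}` that are
the parent of no node `k ∈ {2, …, n}`. -/
def hoppeLeafCount {Ω : Type*} (U : ℕ → Ω → ℕ) (ω : Ω) (n : ℕ) : ℕ :=
  ((Finset.Icc 1 n).filter (fun j => ∀ k ∈ Finset.Icc 2 n, U (k - 2) ω ≠ j)).card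

/-!
A Hoppe tree with `n = m + 1` nodes is grown from the `m` parent choices `U 0, …, U (m - 1)`;
reveal them one at a time. Given the first `k` of them, the conditional expectation of the leaf
count is explicit: every node `j` that is still childless contributes the probability
`∏_{k ≤ i < m} P(U i ≠ j)` that it stays childless. Revealing `U k` can only remove the
contribution of the chosen parent `u`; for `u ≥ 2` that contribution telescopes to
`(θ + k) / (θ + m - 1)`, and for `u = 1` it vanishes because the root already has node `2` as a
child. So each increment of this Doob martingale ranges over an interval of length
`(θ + k) / (θ + m - 1)`, and Hoeffding's lemma, applied one step at a time, makes the centred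
leaf count sub-Gaussian with variance proxy `∑_{k < m} ((θ + k) / (θ + m - 1))² / 4`, which is at
most `(m + θ + 2) / 12 = (n + θ + 1) / 12`. The Chernoff bound on both tails concludes.
-/

open Finset
open scoped NNReal

lemma DependsOn.comp_left {ι β γ : Type*} {α : ι → Type*} {f : (Π i, α i) → β} {s : Set ι}
    (hf : DependsOn f s) (g : β → γ) : DependsOn (g ∘ f) s :=
  fun _ _ h => congrArg g (hf h)

lemma Set.EqOn.update_Iio_succ {α : Type*} {v w : ℕ → α} {k : ℕ} (h : Set.EqOn v w (Set.Iio k))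
    (u : α) : Set.EqOn (Function.update v k u) (Function.update w k u) (Set.Iio (k + 1)) := by
  intro i hi
  rcases eq_or_ne i k with rfl | hik
  · simp
  · simpa [Function.update_of_ne hik] using h (show i < k by grind)

lemma Set.domRestrict_surjective {ι α : Type*} [Nonempty α] (s : Set ι) :
    Function.Surjective fun f : ι → α => s.domRestrict f := fun x =>
  ⟨Function.extend Subtype.val x fun _ => Classical.arbitrary α,
    funext fun i => Subtype.val_injective.extend_apply _ _ i⟩

lemma norm_exp_mul_le {x C : ℝ} (hx : |x| ≤ C) (t : ℝ) : ‖exp (t * x)‖ ≤ exp (|t| * C) := by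
  rw [Real.norm_eq_abs, abs_of_pos (exp_pos _)]
  exact exp_le_exp.2 ((le_abs_self _).trans
    (by rw [abs_mul]; exact mul_le_mul_of_nonneg_left hx (abs_nonneg t)))

lemma integral_exp_mul_le_of_mem_Icc {β : Type*} [MeasurableSpace β] {ν : Measure β}
    [IsProbabilityMeasure ν] {g : β → ℝ} (hg : AEMeasurable g ν) {a L : ℝ}
    (hgL : ∀ᵐ x ∂ν, g x ∈ Set.Icc a (a + L)) (t : ℝ) :
    ∫ x, exp (t * g x) ∂ν ≤ exp (t * ∫ x, g x ∂ν + (L / 2) ^ 2 * t ^ 2 / 2) := by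
  have hoeffding := (hasSubgaussianMGF_of_mem_Icc hg hgL).mgf_le t
  simp_rw [sub_eq_add_neg (g _), mgf_add_const, add_sub_cancel_left] at hoeffding
  have hsq : ((‖L‖₊ / 2) ^ 2 : ℝ≥0) = (L / 2) ^ 2 := by simp [div_pow]
  rw [hsq, mgf, ← le_div_iff₀ (exp_pos _), ← exp_sub] at hoeffding
  exact hoeffding.trans_eq (congrArg exp (by ring))

namespace ProbabilityTheory.HasSubgaussianMGF

variable {Ω : Type*} [MeasurableSpace Ω] {μ : Measure Ω} {X : Ω → ℝ} {c : ℝ≥0}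

lemma mono {c' : ℝ≥0} (h : HasSubgaussianMGF X c μ) (hc : c ≤ c') :
    HasSubgaussianMGF X c' μ :=
  ⟨h.integrable_exp_mul, fun t => (h.mgf_le t).trans (exp_le_exp.2 (by gcongr))⟩

lemma measure_abs_ge_le [IsFiniteMeasure μ] (h : HasSubgaussianMGF X c μ) {ε : ℝ} (hε : 0 ≤ ε) :
    μ {ω | ε ≤ |X ω|} ≤ ENNReal.ofReal (2 * exp (-ε ^ 2 / (2 * c))) := by
  calc μ {ω | ε ≤ |X ω|} ≤ μ ({ω | ε ≤ X ω} ∪ {ω | ε ≤ (-X) ω}) :=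
        measure_mono fun ω (hω : ε ≤ |X ω|) =>
          (le_abs'.1 hω).symm.imp id fun h => show ε ≤ -X ω by linarith
    _ ≤ ENNReal.ofReal (μ.real {ω | ε ≤ X ω}) + ENNReal.ofReal (μ.real {ω | ε ≤ (-X) ω}) := by
        rw [ofReal_measureReal, ofReal_measureReal]; exact measure_union_le _ _
    _ ≤ ENNReal.ofReal (exp (-ε ^ 2 / (2 * c))) + ENNReal.ofReal (exp (-ε ^ 2 / (2 * c))) := by
        gcongr
        exacts [h.measure_ge_le hε, h.neg.measure_ge_le hε]
    _ = ENNReal.ofReal (2 * exp (-ε ^ 2 / (2 * c))) := by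
        rw [← ENNReal.ofReal_add (exp_pos _).le (exp_pos _).le, ← two_mul]

end ProbabilityTheory.HasSubgaussianMGF

lemma ProbabilityTheory.IndepFun.integral_comp_eq_integral_integral_map {Ω β γ : Type*}
    [MeasurableSpace Ω] {μ : Measure Ω} [IsProbabilityMeasure μ] [MeasurableSpace β] [Countable β]
    [MeasurableSingletonClass β] [MeasurableSpace γ] [Countable γ] [MeasurableSingletonClass γ]
    {X : Ω → β} {Y : Ω → γ} (hXY : IndepFun X Y μ) (hX : Measurable X) (hY : Measurable Y)
    {h : β → γ → ℝ} {C : ℝ} (hC : ∀ x y, |h x y| ≤ C) :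
    ∫ ω, h (X ω) (Y ω) ∂μ = ∫ ω, ∫ y, h (X ω) y ∂(μ.map Y) ∂μ := by
  have : IsProbabilityMeasure (μ.map X) := Measure.isProbabilityMeasure_map hX.aemeasurable
  have : IsProbabilityMeasure (μ.map Y) := Measure.isProbabilityMeasure_map hY.aemeasurable
  have hint : Integrable (Function.uncurry h) ((μ.map X).prod (μ.map Y)) :=
    .of_bound (measurable_of_countable _).aestronglyMeasurable C
      (.of_forall fun p => (Real.norm_eq_abs _).trans_le (hC p.1 p.2))
  calc ∫ ω, h (X ω) (Y ω) ∂μ = ∫ p, Function.uncurry h p ∂(μ.map fun ω => (X ω, Y ω)) :=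
        (integral_map (f := Function.uncurry h) (hX.prodMk hY).aemeasurable
          (measurable_of_countable _).aestronglyMeasurable).symm
    _ = ∫ p, Function.uncurry h p ∂((μ.map X).prod (μ.map Y)) := by
        rw [(indepFun_iff_map_prod_eq_prod_map_map hX.aemeasurable hY.aemeasurable).1 hXY]
    _ = ∫ x, ∫ y, h x y ∂(μ.map Y) ∂(μ.map X) := integral_prod _ hint
    _ = ∫ ω, ∫ y, h (X ω) y ∂(μ.map Y) ∂μ :=
        integral_map hX.aemeasurable (measurable_of_countable _).aestronglyMeasurable

section DoobMartingale

variable {α : Type*} [MeasurableSpace α] {ν : ℕ → Measure α} {m : ℕ} {G : (ℕ → α) → ℝ}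

/-- When the `U i` are independent with laws `ν i`, `integrateFrom ν m G k v` is the conditional
expectation of `G U` given `U i = v i` for `i < k`: it integrates out the coordinates `k, …, m - 1`
of `v`. -/
def integrateFrom (ν : ℕ → Measure α) (m : ℕ) (G : (ℕ → α) → ℝ) (k : ℕ) (v : ℕ → α) : ℝ :=
  if k < m then ∫ u, integrateFrom ν m G (k + 1) (Function.update v k u) ∂ν k else G v
termination_by m - k

lemma integrateFrom_of_lt {k : ℕ} (hk : k < m) (v : ℕ → α) :
    integrateFrom ν m G k v = ∫ u, integrateFrom ν m G (k + 1) (Function.update v k u) ∂ν k := by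
  rw [integrateFrom, if_pos hk]

lemma integrateFrom_of_le {k : ℕ} (hk : m ≤ k) (v : ℕ → α) : integrateFrom ν m G k v = G v := by
  rw [integrateFrom, if_neg hk.not_gt]

lemma abs_integrateFrom_le [∀ i, IsProbabilityMeasure (ν i)] {C : ℝ} (hC : ∀ v, |G v| ≤ C)
    (k : ℕ) (v : ℕ → α) : |integrateFrom ν m G k v| ≤ C := by
  fun_induction integrateFrom ν m G k v with
  | case1 k v _ ih =>
    simpa using norm_integral_le_of_norm_le_const (μ := ν k)
      (.of_forall fun u => (Real.norm_eq_abs _).trans_le (ih u))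
  | case2 k v _ => exact hC v

lemma dependsOn_integrateFrom (hG : DependsOn G (Set.Iio m)) (k : ℕ) :
    DependsOn (integrateFrom ν m G k) (Set.Iio k) := by
  intro v w hvw
  fun_induction integrateFrom ν m G k v generalizing w with
  | case1 k v hk ih =>
    rw [integrateFrom_of_lt hk]
    exact integral_congr_ae (.of_forall fun u => ih u (Set.EqOn.update_Iio_succ hvw u))
  | case2 k v hk =>
    rw [integrateFrom_of_le (not_lt.1 hk)]
    exact hG fun i hi => hvw i (lt_of_lt_of_le hi (not_lt.1 hk))

end DoobMartingale

section IndependentCoordinates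

variable {Ω : Type*} [MeasurableSpace Ω] {μ : Measure Ω} [IsProbabilityMeasure μ]
  {α : Type*} [MeasurableSpace α] [Countable α] [MeasurableSingletonClass α] {U : ℕ → Ω → α}

lemma measurable_comp_of_dependsOn (hU : ∀ i, Measurable (U i)) {φ : (ℕ → α) → ℝ} {k : ℕ}
    (hφ : DependsOn φ (Set.Iio k)) : Measurable fun ω => φ fun i => U i ω := by
  obtain ⟨g, rfl⟩ := dependsOn_iff_exists_comp.1 hφ
  exact (measurable_of_countable g).comp (measurable_pi_lambda _ fun i => hU i)

lemma integral_comp_eq_integral_integral_update (hU : ∀ i, Measurable (U i))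
    (hindep : iIndepFun U μ) {φ : (ℕ → α) → ℝ} {k : ℕ} (hφ : DependsOn φ (Set.Iio (k + 1))) {C : ℝ}
    (hC : ∀ v, |φ v| ≤ C) :
    ∫ ω, φ (fun i => U i ω) ∂μ
      = ∫ ω, ∫ u, φ (Function.update (fun i => U i ω) k u) ∂(μ.map (U k)) ∂μ := by
  have hψ : DependsOn (fun v u => φ (Function.update v k u)) (Set.Iio k) := fun _ _ hvw =>
    funext fun u => hφ (Set.EqOn.update_Iio_succ hvw u)
  obtain ⟨g, hg⟩ := dependsOn_iff_exists_comp.1 hψ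
  have hg' (v : ℕ → α) (u : α) : g ((Set.Iio k).domRestrict v) u = φ (Function.update v k u) :=
    (congrFun (congrFun hg v) u).symm
  have hindep' : IndepFun (fun ω => (Set.Iio k).domRestrict fun i => U i ω) (U k) μ :=
    (hindep.indepFun_finset (range k) {k} (by simp) hU).comp
      (φ := fun (x : (i : range k) → α) (i : Set.Iio k) => x ⟨i, mem_range.2 i.2⟩)
      (ψ := fun (y : (i : ({k} : Finset ℕ)) → α) => y ⟨k, mem_singleton_self k⟩)
      (measurable_of_countable _) (measurable_of_countable _)
  have : Nonempty α := ⟨U 0 (nonempty_of_isProbabilityMeasure μ).some⟩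
  have key := hindep'.integral_comp_eq_integral_integral_map
    (measurable_pi_lambda _ fun i => hU i) (hU k) (h := g) (C := C) fun x u => by
      obtain ⟨v, rfl⟩ := Set.domRestrict_surjective (Set.Iio k) x
      exact hg' v u ▸ hC _
  simpa only [hg', Function.update_eq_self] using key

variable {m : ℕ} {G : (ℕ → α) → ℝ} {C : ℝ}

lemma integral_integrateFrom_succ (hU : ∀ i, Measurable (U i)) (hindep : iIndepFun U μ)
    (hG : DependsOn G (Set.Iio m)) (hC : ∀ v, |G v| ≤ C) {k : ℕ} (hk : k < m) :
    ∫ ω, integrateFrom (fun i => μ.map (U i)) m G (k + 1) (fun i => U i ω) ∂μ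
      = ∫ ω, integrateFrom (fun i => μ.map (U i)) m G k (fun i => U i ω) ∂μ := by
  have := fun i => Measure.isProbabilityMeasure_map (μ := μ) (hU i).aemeasurable
  rw [integral_comp_eq_integral_integral_update hU hindep (dependsOn_integrateFrom hG _)
    (abs_integrateFrom_le hC _)]
  exact integral_congr_ae
    (.of_forall fun ω => (integrateFrom_of_lt (ν := fun i => μ.map (U i)) hk _).symm)

lemma integrateFrom_zero_eq_integral (hU : ∀ i, Measurable (U i)) (hindep : iIndepFun U μ)
    (hG : DependsOn G (Set.Iio m)) (hC : ∀ v, |G v| ≤ C) (v : ℕ → α) :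
    integrateFrom (fun i => μ.map (U i)) m G 0 v = ∫ ω, G (fun i => U i ω) ∂μ := by
  have hconst (w : ℕ → α) :
      integrateFrom (fun i => μ.map (U i)) m G 0 w = integrateFrom (fun i => μ.map (U i)) m G 0 v :=
    dependsOn_integrateFrom hG 0 fun i hi => absurd hi (Nat.not_lt_zero i)
  have hstep (k : ℕ) (hk : k ≤ m) :
      ∫ ω, integrateFrom (fun i => μ.map (U i)) m G k (fun i => U i ω) ∂μ
        = integrateFrom (fun i => μ.map (U i)) m G 0 v := by
    induction k, Nat.zero_le k using Nat.le_induction with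
    | base => simp [hconst]
    | succ k _ ih => rw [integral_integrateFrom_succ hU hindep hG hC hk, ih (by omega)]
  simpa [integrateFrom_of_le le_rfl] using (hstep m le_rfl).symm

lemma integral_exp_integrateFrom_succ_le (hU : ∀ i, Measurable (U i)) (hindep : iIndepFun U μ)
    (hG : DependsOn G (Set.Iio m)) (hC : ∀ v, |G v| ≤ C) {k : ℕ} (hk : k < m) {L : ℝ}
    (hosc : ∀ᵐ ω ∂μ, ∃ a, ∀ᵐ u ∂(μ.map (U k)), integrateFrom (fun i => μ.map (U i)) m G (k + 1)
      (Function.update (fun i => U i ω) k u) ∈ Set.Icc a (a + L)) (t : ℝ) :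
    ∫ ω, exp (t * integrateFrom (fun i => μ.map (U i)) m G (k + 1) (fun i => U i ω)) ∂μ
      ≤ exp ((L / 2) ^ 2 * t ^ 2 / 2)
        * ∫ ω, exp (t * integrateFrom (fun i => μ.map (U i)) m G k (fun i => U i ω)) ∂μ := by
  set H := integrateFrom (fun i => μ.map (U i)) m G
  have := fun i => Measure.isProbabilityMeasure_map (μ := μ) (hU i).aemeasurable
  have hexp_le (j : ℕ) (v : ℕ → α) : ‖exp (t * H j v)‖ ≤ exp (|t| * C) :=
    norm_exp_mul_le (abs_integrateFrom_le hC j v) t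
  rw [integral_comp_eq_integral_integral_update hU hindep (φ := fun v => exp (t * H (k + 1) v))
    ((dependsOn_integrateFrom hG (k + 1)).comp_left fun x => exp (t * x))
    (fun v => hexp_le (k + 1) v),
    ← integral_const_mul]
  refine integral_mono_of_nonneg (.of_forall fun ω => integral_nonneg fun u => (exp_pos _).le)
    (Integrable.const_mul (.of_bound (measurable_comp_of_dependsOn hU
      ((dependsOn_integrateFrom hG k).comp_left fun x => exp (t * x))).aestronglyMeasurable _
        (.of_forall fun ω => hexp_le k _)) _) ?_
  filter_upwards [hosc] with ω ⟨a, ha⟩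
  calc ∫ u, exp (t * H (k + 1) (Function.update (fun i => U i ω) k u)) ∂(μ.map (U k))
      ≤ exp (t * ∫ u, H (k + 1) (Function.update (fun i => U i ω) k u) ∂(μ.map (U k))
          + (L / 2) ^ 2 * t ^ 2 / 2) :=
        integral_exp_mul_le_of_mem_Icc (measurable_of_countable _).aemeasurable ha t
    _ = exp ((L / 2) ^ 2 * t ^ 2 / 2) * exp (t * H k (fun i => U i ω)) := by
        rw [show ∫ u, H (k + 1) (Function.update (fun i => U i ω) k u) ∂(μ.map (U k))
          = H k (fun i => U i ω) from (integrateFrom_of_lt (ν := fun i => μ.map (U i)) hk _).symm,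
          exp_add, mul_comm]

theorem hasSubgaussianMGF_sub_integral_of_integrateFrom_mem_Icc (hU : ∀ i, Measurable (U i))
    (hindep : iIndepFun U μ) (hG : DependsOn G (Set.Iio m)) (hC : ∀ v, |G v| ≤ C) {L : ℕ → ℝ}
    (hosc : ∀ k < m, ∀ᵐ ω ∂μ, ∃ a, ∀ᵐ u ∂(μ.map (U k)),
      integrateFrom (fun i => μ.map (U i)) m G (k + 1) (Function.update (fun i => U i ω) k u)
        ∈ Set.Icc a (a + L k)) :
    HasSubgaussianMGF (fun ω => G (fun i => U i ω) - ∫ ω', G (fun i => U i ω') ∂μ)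
      (∑ k ∈ range m, (‖L k‖₊ / 2) ^ 2) μ := by
  set H := integrateFrom (fun i => μ.map (U i)) m G
  set E := ∫ ω', G (fun i => U i ω') ∂μ
  have hmgf (t : ℝ) (k : ℕ) (hk : k ≤ m) : ∫ ω, exp (t * H k (fun i => U i ω)) ∂μ
      ≤ exp ((∑ i ∈ range k, (L i / 2) ^ 2) * t ^ 2 / 2) * exp (t * E) := by
    induction k, Nat.zero_le k using Nat.le_induction with
    | base => simp [H, integrateFrom_zero_eq_integral hU hindep hG hC, E]
    | succ k _ ih =>
      calc _ ≤ exp ((L k / 2) ^ 2 * t ^ 2 / 2) * ∫ ω, exp (t * H k (fun i => U i ω)) ∂μ :=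
            integral_exp_integrateFrom_succ_le hU hindep hG hC hk (hosc k hk) t
        _ ≤ exp ((L k / 2) ^ 2 * t ^ 2 / 2)
              * (exp ((∑ i ∈ range k, (L i / 2) ^ 2) * t ^ 2 / 2) * exp (t * E)) := by
            gcongr; exact ih (by omega)
        _ = _ := by rw [sum_range_succ, ← mul_assoc, ← exp_add]; ring_nf
  have hGm (v : ℕ → α) : H m v = G v := integrateFrom_of_le le_rfl v
  refine ⟨fun t => ?_, fun t => ?_⟩
  · simp_rw [mul_sub, exp_sub]
    refine Integrable.div_const (.of_bound (measurable_comp_of_dependsOn hU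
      (hG.comp_left fun x => exp (t * x))).aestronglyMeasurable
      (exp (|t| * C)) (.of_forall fun ω => norm_exp_mul_le (hC _) t)) _
  · calc mgf (fun ω => G (fun i => U i ω) - E) μ t
        = (∫ ω, exp (t * H m (fun i => U i ω)) ∂μ) * exp (t * -E) := by
          simp_rw [sub_eq_add_neg (G _), mgf_add_const, mgf, hGm]
      _ ≤ exp ((∑ i ∈ range m, (L i / 2) ^ 2) * t ^ 2 / 2) * exp (t * E) * exp (t * -E) := by
          gcongr; exact hmgf t m le_rfl
      _ = _ := by
          rw [mul_assoc, ← exp_add, mul_neg, add_neg_cancel, exp_zero, mul_one]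
          push_cast
          simp only [Real.norm_eq_abs, div_pow, sq_abs]

end IndependentCoordinates

def leafCount (m : ℕ) (v : ℕ → ℕ) : ℝ :=
  ∑ j ∈ Icc 1 (m + 1), if ∀ i < m, v i ≠ j then 1 else 0

lemma hoppeLeafCount_eq_leafCount {Ω : Type*} (U : ℕ → Ω → ℕ) (ω : Ω) (m : ℕ) :
    (hoppeLeafCount U ω (m + 1) : ℝ) = leafCount m fun i => U i ω := by
  classical
  rw [hoppeLeafCount, card_filter, leafCount, Nat.cast_sum]
  refine sum_congr rfl fun j _ => ?_
  have : (∀ k ∈ Icc 2 (m + 1), U (k - 2) ω ≠ j) ↔ ∀ i < m, U i ω ≠ j :=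
    ⟨fun h i hi => by simpa using h (i + 2) (mem_Icc.2 ⟨by omega, by omega⟩),
      fun h k hk => h (k - 2) (by grind)⟩
  simp only [this, Nat.cast_ite, Nat.cast_one, Nat.cast_zero]

lemma dependsOn_leafCount (m : ℕ) : DependsOn (leafCount m) (Set.Iio m) := fun v w h => by
  simp only [leafCount]
  refine sum_congr rfl fun j _ => ?_
  have : (∀ i < m, v i ≠ j) ↔ ∀ i < m, w i ≠ j :=
    forall₂_congr fun i hi => by rw [h i hi]
  simp only [this]

lemma abs_leafCount_le (m : ℕ) (v : ℕ → ℕ) : |leafCount m v| ≤ m + 1 := by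
  rw [abs_of_nonneg (sum_nonneg fun j _ => by positivity)]
  calc leafCount m v ≤ ∑ _j ∈ Icc 1 (m + 1), (1 : ℝ) :=
        sum_le_sum fun j _ => by split_ifs <;> norm_num
    _ = m + 1 := by simp

def probNoChild (ν : ℕ → Measure ℕ) (k m j : ℕ) : ℝ :=
  ∏ i ∈ Ico k m, (ν i).real {j}ᶜ

lemma forall_lt_succ_update_ne_iff {α : Type*} {v : ℕ → α} {k : ℕ} {u a : α} :
    (∀ i < k + 1, Function.update v k u i ≠ a) ↔ (∀ i < k, v i ≠ a) ∧ u ≠ a := by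
  rw [Nat.forall_lt_succ_right, Function.update_self]
  refine and_congr_left' (forall₂_congr fun i hi => ?_)
  rw [Function.update_of_ne hi.ne]

section

variable {ν : ℕ → Measure ℕ} [∀ i, IsFiniteMeasure (ν i)] {m : ℕ}

lemma integrateFrom_leafCount {k : ℕ} (hk : k ≤ m) (v : ℕ → ℕ) :
    integrateFrom ν m (leafCount m) k v
      = ∑ j ∈ Icc 1 (m + 1), if ∀ i < k, v i ≠ j then probNoChild ν k m j else 0 := by
  induction hk using Nat.decreasingInduction generalizing v with
  | self => simp [integrateFrom_of_le le_rfl, leafCount, probNoChild]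
  | of_succ k hk ih =>
    rw [integrateFrom_of_lt hk]
    simp_rw [ih, forall_lt_succ_update_ne_iff]
    rw [integral_finsetSum _ fun j _ => .of_bound (measurable_of_countable _).aestronglyMeasurable
      |probNoChild ν (k + 1) m j| (.of_forall fun u => by split_ifs <;> simp)]
    refine sum_congr rfl fun j _ => ?_
    split_ifs with hv
    · have : (fun u : ℕ => if (∀ i < k, v i ≠ j) ∧ u ≠ j then probNoChild ν (k + 1) m j else 0)
          = ({j}ᶜ : Set ℕ).indicator fun _ => probNoChild ν (k + 1) m j := by
        ext u
        by_cases hu : u = j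
        · simp [hu]
        · rw [if_pos ⟨hv, hu⟩, Set.indicator_of_mem (by simpa using hu)]
      rw [this, integral_indicator_const _ (measurableSet_singleton j).compl, smul_eq_mul,
        probNoChild, probNoChild, prod_eq_prod_Ico_succ_bot hk]
    · simp [hv]

lemma integrateFrom_leafCount_update {k : ℕ} (hk : k < m) (v : ℕ → ℕ) (u : ℕ) :
    integrateFrom ν m (leafCount m) (k + 1) (Function.update v k u)
      = (∑ j ∈ Icc 1 (m + 1), if ∀ i < k, v i ≠ j then probNoChild ν (k + 1) m j else 0)
        - if u ∈ Icc 1 (m + 1) then (if ∀ i < k, v i ≠ u then probNoChild ν (k + 1) m u else 0)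
          else 0 := by
  rw [integrateFrom_leafCount hk, ← sum_ite_eq' (Icc 1 (m + 1)) u
    fun j => if ∀ i < k, v i ≠ j then probNoChild ν (k + 1) m j else 0, ← sum_sub_distrib]
  refine sum_congr rfl fun j _ => ?_
  simp_rw [forall_lt_succ_update_ne_iff]
  rcases eq_or_ne j u with rfl | hj
  · simp
  · simp [hj, hj.symm]

end

lemma prod_Ico_one_sub_one_div {θ : ℝ} (hθ : 0 < θ) {a b : ℕ} (ha : 1 ≤ a) (hab : a ≤ b) :
    ∏ i ∈ Ico a b, (1 - 1 / (θ + i)) = (θ + a - 1) / (θ + b - 1) := by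
  have ha' : (1 : ℝ) ≤ a := by exact_mod_cast ha
  induction b, hab using Nat.le_induction with
  | base => rw [Ico_self, prod_empty, div_self (by linarith)]
  | succ b hab ih =>
    have hb : (1 : ℝ) ≤ b := by exact_mod_cast ha.trans hab
    have h₁ : θ + b - 1 ≠ 0 := by linarith
    have h₂ : θ + b ≠ 0 := by linarith
    rw [prod_Ico_succ_top hab, ih, Nat.cast_add_one, show θ + (b + 1 : ℝ) - 1 = θ + b by ring]
    field_simp

lemma sum_sq_div_le {θ : ℝ} (hθ : 0 < θ) (m : ℕ) :
    ∑ k ∈ range m, ((θ + k) / (θ + m - 1)) ^ 2 ≤ (m + θ + 2) / 3 := by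
  rcases Nat.eq_zero_or_pos m with rfl | hm
  · rw [range_zero, sum_empty]
    positivity
  have hsum : 3 * ∑ k ∈ range m, (θ + k) ^ 2 ≤ (m + θ + 2) * (θ + m - 1) ^ 2 := by
    induction m, hm using Nat.le_induction with
    | base =>
      simp only [range_one, sum_singleton, CharP.cast_eq_zero, Nat.cast_one]
      nlinarith
    | succ m hm ih =>
      have : (1 : ℝ) ≤ m := by exact_mod_cast hm
      rw [sum_range_succ]
      push_cast
      nlinarith
  have hm' : 0 < θ + m - 1 := by
    have : (1 : ℝ) ≤ m := by exact_mod_cast hm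
    linarith
  simp_rw [div_pow, ← sum_div]
  rw [div_le_div_iff₀ (pow_pos hm' 2) (by norm_num)]
  nlinarith

section Hoppe

variable {Ω : Type*} [MeasurableSpace Ω] {θ : ℝ} {μ : Measure Ω} [IsProbabilityMeasure μ]
  {U : ℕ → Ω → ℕ}

namespace IsHoppeParents

lemma ae_map_mem_Icc (hU : IsHoppeParents θ μ U) (k : ℕ) :
    ∀ᵐ u ∂(μ.map (U k)), u ∈ Icc 1 (k + 1) := by
  have := Measure.isProbabilityMeasure_map (μ := μ) (hU.meas k).aemeasurable
  rw [ae_iff_prob_eq_one (measurable_of_countable _), Measure.map_apply (hU.meas k)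
    MeasurableSet.of_discrete]
  simpa using hU.range k

lemma ae_zero_eq_one (hθ : 0 < θ) (hU : IsHoppeParents θ μ U) : ∀ᵐ ω ∂μ, U 0 ω = 1 := by
  rw [ae_iff_prob_eq_one (p := fun ω => U 0 ω = 1)
    ((measurable_of_countable (· = 1)).comp (hU.meas 0))]
  simpa [hθ.ne'] using hU.root 0

lemma measureReal_map_compl_singleton (hθ : 0 < θ) (hU : IsHoppeParents θ μ U) {k j : ℕ}
    (h2 : 2 ≤ j) (hj : j ≤ k + 1) : (μ.map (U k)).real {j}ᶜ = 1 - 1 / (θ + k) := by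
  have := Measure.isProbabilityMeasure_map (μ := μ) (hU.meas k).aemeasurable
  rw [probReal_compl_eq_one_sub (measurableSet_singleton j), measureReal_def,
    Measure.map_apply (hU.meas k) (measurableSet_singleton j)]
  rw [show U k ⁻¹' {j} = {ω | U k ω = j} from rfl, hU.nonroot k j h2 hj,
    ENNReal.toReal_ofReal (by positivity)]

lemma probNoChild_eq (hθ : 0 < θ) (hU : IsHoppeParents θ μ U) {k m j : ℕ} (hkm : k < m)
    (h2 : 2 ≤ j) (hj : j ≤ k + 1) :
    probNoChild (fun i => μ.map (U i)) (k + 1) m j = (θ + k) / (θ + m - 1) := by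
  rw [probNoChild, prod_congr rfl fun i hi => hU.measureReal_map_compl_singleton hθ h2
    (hj.trans ((mem_Ico.1 hi).1.trans (Nat.le_succ i))), prod_Ico_one_sub_one_div hθ (by omega) hkm]
  push_cast
  ring_nf

lemma ae_exists_integrateFrom_leafCount_mem_Icc (hθ : 0 < θ)
    (hU : IsHoppeParents θ μ U) {m k : ℕ} (hk : k < m) :
    ∀ᵐ ω ∂μ, ∃ a, ∀ᵐ u ∂(μ.map (U k)),
      integrateFrom (fun i => μ.map (U i)) m (leafCount m) (k + 1)
        (Function.update (fun i => U i ω) k u) ∈ Set.Icc a (a + (θ + k) / (θ + m - 1)) := by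
  have := fun i => Measure.isProbabilityMeasure_map (μ := μ) (hU.meas i).aemeasurable
  have hm : (1 : ℝ) ≤ m := by exact_mod_cast (show 1 ≤ m by omega)
  have hw : 0 ≤ (θ + k) / (θ + m - 1) := by
    have : (0 : ℝ) ≤ k := k.cast_nonneg
    apply div_nonneg <;> linarith
  rcases Nat.eq_zero_or_pos k with rfl | hk0
  · refine .of_forall fun ω => ⟨integrateFrom (fun i => μ.map (U i)) m (leafCount m) 1
      (Function.update (fun i => U i ω) 0 1), ?_⟩
    filter_upwards [hU.ae_map_mem_Icc 0] with u hu
    obtain rfl : u = 1 := by simpa using hu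
    exact ⟨le_rfl, le_add_of_nonneg_right hw⟩
  filter_upwards [hU.ae_zero_eq_one hθ] with ω hω
  refine ⟨(∑ j ∈ Icc 1 (m + 1), if ∀ i < k, U i ω ≠ j
    then probNoChild (fun i => μ.map (U i)) (k + 1) m j else 0) - (θ + k) / (θ + m - 1), ?_⟩
  filter_upwards [hU.ae_map_mem_Icc k] with u hu
  rw [integrateFrom_leafCount_update hk, if_pos (Icc_subset_Icc_right (by omega) hu)]
  have hleaf : (if ∀ i < k, U i ω ≠ u then probNoChild (fun i => μ.map (U i)) (k + 1) m u else 0)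
      ∈ Set.Icc 0 ((θ + k) / (θ + m - 1)) := by
    split_ifs with hu'
    · have h2 : 2 ≤ u := by
        have := hu' 0 hk0
        have := (mem_Icc.1 hu).1
        omega
      rw [hU.probNoChild_eq hθ hk h2 (mem_Icc.1 hu).2]
      exact ⟨hw, le_rfl⟩
    · exact ⟨le_rfl, hw⟩
  constructor <;> linarith [hleaf.1, hleaf.2]

end IsHoppeParents

end Hoppe

/-- Concentration inequality for the number of leaves of a Hoppe tree. -/
theorem hoppe_leaves_concentration
    {Ω : Type*} [MeasurableSpace Ω]
    (θ : ℝ) (hθ : 0 < θ)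
    (μ : Measure Ω) [IsProbabilityMeasure μ] (U : ℕ → Ω → ℕ) (hU : IsHoppeParents θ μ U) :
    ∀ n : ℕ, 1 ≤ n → ∀ t : ℝ, 0 < t →
      μ {ω | t ≤ |(hoppeLeafCount U ω n : ℝ) - ∫ ω', (hoppeLeafCount U ω' n : ℝ) ∂μ|}
        ≤ ENNReal.ofReal (2 * Real.exp (-6 * t ^ 2 / ((n : ℝ) + θ + 1))) := by
  intro n hn t ht
  obtain ⟨m, rfl⟩ : ∃ m, n = m + 1 := ⟨n - 1, by omega⟩
  have hsubG := hasSubgaussianMGF_sub_integral_of_integrateFrom_mem_Icc hU.meas hU.indep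
    (dependsOn_leafCount m) (abs_leafCount_le m)
    fun k hk => hU.ae_exists_integrateFrom_leafCount_mem_Icc hθ hk
  let c : ℝ≥0 := ⟨(m + θ + 2) / 12, by positivity⟩
  have hc : ∑ k ∈ range m, (‖(θ + k) / (θ + m - 1)‖₊ / 2) ^ 2 ≤ c := by
    rw [← NNReal.coe_le_coe]
    push_cast
    have hsq (x : ℝ) : (|x| / 2) ^ 2 = x ^ 2 / 4 := by rw [div_pow, sq_abs]; norm_num
    simp only [Real.norm_eq_abs, hsq, ← sum_div]
    show _ ≤ (m + θ + 2) / 12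
    linarith [sum_sq_div_le hθ m]
  simp_rw [hoppeLeafCount_eq_leafCount]
  have hexponent : -t ^ 2 / (2 * (c : ℝ)) = -6 * t ^ 2 / (((m + 1 : ℕ) : ℝ) + θ + 1) := by
    show -t ^ 2 / (2 * ((m + θ + 2) / 12)) = _
    push_cast
    field_simp
    ring
  rw [← hexponent]
  exact (hsubG.mono hc).measure_abs_ge_le ht.le

end
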